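/- arXiv:2108.03059 — 6 statements merged into one kernel-verified Lean document; each statement's English description precedes it below -/
import Mathlib

section
/- If G is a simple graph on a finite vertex set with ν(G) > 0, then there exist adjacent vertices u and v of G such that ν(G − uv) < ν(G), i.e., removing the edge uv strictly decreases the nullity. -/
open Matrix
open scoped Classical

/-- The closed neighborhood matrix of a simple graph over `ℤ₂`:
`N(G) u v = 1` iff `u = v` or `u` is adjacent to `v`. -/
noncomputable def nbhdMatrix {V : Type*} [Fintype V] (G : SimpleGraph V) :
    Matrix V V (ZMod 2) :=
  Matrix.of fun u v => if u = v ∨ G.Adj u v then 1 else 0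

/-- The nullity of a matrix over `ℤ₂`: the dimension of its kernel. -/
noncomputable def nullityM {V : Type*} [Fintype V] (M : Matrix V V (ZMod 2)) : ℕ :=
  Module.finrank (ZMod 2) (LinearMap.ker M.mulVecLin)

/-- The nullity `ν(G)` of a graph. -/
noncomputable def graphNullity {V : Type*} [Fintype V] (G : SimpleGraph V) : ℕ :=
  nullityM (nbhdMatrix G)

/-- Characteristic vector of a set of vertices. -/
noncomputable def chi {V : Type*} (A : Set V) : V → ZMod 2 :=
  fun v => if v ∈ A then 1 else 0

/-- A configuration `c` is solvable (w.r.t. the matrix `M`) if `M p = c` for some pattern `p`. -/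
def Solv {V : Type*} [Fintype V] (M : Matrix V V (ZMod 2)) (c : V → ZMod 2) : Prop :=
  ∃ p : V → ZMod 2, M.mulVec p = c

/-!
Over `ℤ₂` a symmetric matrix satisfies `yᵀ M y = y ⬝ diag M`, so `diag M` is orthogonal to
`ker M = ker Mᵀ` and `M c = diag M` is solvable (Sutner's theorem). Deleting the edge `uv` adds
`E = e_u e_vᵀ + e_v e_uᵀ` to `M = N(G)`. If `x ∈ ker M` has `x u = 1` and `c v ≠ x v * c u`,
pairing a kernel vector `y` of `M + E` with `x`, `c` and `y` itself forces `y u = y v = 0`, so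
`ker (M + E) ⊊ ker M`. If no neighbour `v` of `u` were of this kind, `d = c - c u • x` would
vanish on the closed neighbourhood of `u`, so `(M d) u = 0`; but `M d = diag M` has `u`-entry `1`.
-/

section Fredholm

variable {m n K : Type*} [Fintype m] [Fintype n] [Field K]

theorem Matrix.exists_mulVec_eq_of_forall_vecMul_eq_zero {M : Matrix m n K} {b : m → K}
    (h : ∀ y, y ᵥ* M = 0 → y ⬝ᵥ b = 0) : ∃ a, M *ᵥ a = b := by
  suffices b ∈ LinearMap.range M.mulVecLin from this
  rw [← Subspace.dualAnnihilator_dualCoannihilator_eq (W := LinearMap.range M.mulVecLin),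
    Submodule.mem_dualCoannihilator]
  intro f hf
  obtain ⟨y, rfl⟩ := (dotProductEquiv K m).surjective f
  have hy : y ᵥ* M = 0 := dotProduct_eq_zero_iff.mp fun a => by
    rw [← dotProduct_mulVec]
    exact (Submodule.mem_dualAnnihilator _).mp hf _ ⟨a, rfl⟩
  exact h y hy

end Fredholm

section

variable {V : Type*}

noncomputable def edgeMatrix (u v : V) : Matrix V V (ZMod 2) :=
  single u v 1 + single v u 1

variable [Fintype V]

theorem CharTwo.sum_sum_eq_sum_diag_of_symm {R : Type*} [Ring R] [CharP R 2] (f : V → V → R)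
    (hf : ∀ i j, f i j = f j i) : ∑ i, ∑ j, f i j = ∑ i, f i i := by
  have hoff : ∑ p : V × V, (if p.1 = p.2 then 0 else f p.1 p.2) = 0 := by
    refine Finset.sum_ninvolution Prod.swap (fun p => ?_) (fun p hp => ?_) (by simp) Prod.swap_swap
    · by_cases h : p.1 = p.2
      · simp [h]
      · simp [h, Ne.symm h, hf p.2 p.1, CharTwo.add_self_eq_zero]
    · by_cases h : p.1 = p.2
      · simp [h] at hp
      · exact fun hswap => h (congrArg Prod.snd hswap)
  have hdiag : ∑ p : V × V, (if p.1 = p.2 then f p.1 p.2 else 0) = ∑ i, f i i := by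
    rw [Fintype.sum_prod_type]
    simp
  calc ∑ i, ∑ j, f i j
      = ∑ p : V × V,
          ((if p.1 = p.2 then f p.1 p.2 else 0) + if p.1 = p.2 then 0 else f p.1 p.2) := by
        rw [Fintype.sum_prod_type]
        refine Finset.sum_congr rfl fun i _ => Finset.sum_congr rfl fun j _ => ?_
        split_ifs <;> simp
    _ = ∑ i, f i i := by rw [Finset.sum_add_distrib, hoff, add_zero, hdiag]

section ZModTwo

variable {M : Matrix V V (ZMod 2)}

theorem Matrix.IsSymm.dotProduct_mulVec_self (hM : M.IsSymm) (y : V → ZMod 2) :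
    y ⬝ᵥ M *ᵥ y = y ⬝ᵥ M.diag := by
  have hsymm : ∀ i j, y i * (M i j * y j) = y j * (M j i * y i) := fun i j => by
    rw [hM.apply i j]; ring
  simp only [dotProduct, mulVec, Finset.mul_sum]
  rw [CharTwo.sum_sum_eq_sum_diag_of_symm _ hsymm]
  refine Finset.sum_congr rfl fun i _ => ?_
  rw [diag_apply, mul_left_comm, ← sq, ZMod.pow_card, mul_comm]

theorem Matrix.IsSymm.exists_mulVec_eq_diag (hM : M.IsSymm) : ∃ c, M *ᵥ c = M.diag :=
  exists_mulVec_eq_of_forall_vecMul_eq_zero fun y hy => by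
    rw [← hM.dotProduct_mulVec_self, dotProduct_mulVec, hy, zero_dotProduct]

theorem dotProduct_edgeMatrix_mulVec (u v : V) (a y : V → ZMod 2) :
    a ⬝ᵥ edgeMatrix u v *ᵥ y = a u * y v + a v * y u := by
  simp only [edgeMatrix, add_mulVec, single_mulVec_eq, dotProduct_add, dotProduct_smul,
    dotProduct_single, one_mul, mul_one, smul_eq_mul]
  ring

theorem edgeMatrix_mulVec_eq_zero {u v : V} {y : V → ZMod 2} (hu : y u = 0) (hv : y v = 0) :
    edgeMatrix u v *ᵥ y = 0 := by
  simp [edgeMatrix, add_mulVec, single_mulVec_eq, hu, hv]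

theorem nullityM_add_edgeMatrix_lt {u v : V} {x : V → ZMod 2} (hx : M *ᵥ x = 0)
    (hxu : x u ≠ 0) (hker : ∀ y, (M + edgeMatrix u v) *ᵥ y = 0 → y u = 0 ∧ y v = 0) :
    nullityM (M + edgeMatrix u v) < nullityM M := by
  refine Submodule.finrank_lt_finrank_of_lt (lt_of_le_of_ne (fun y hy => ?_) fun heq => ?_)
  · obtain ⟨hu, hv⟩ := hker y hy
    simpa [add_mulVec, edgeMatrix_mulVec_eq_zero hu hv] using hy
  · have hx' : x ∈ LinearMap.ker (M + edgeMatrix u v).mulVecLin := heq ▸ hx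
    exact hxu (hker x hx').1

theorem Matrix.IsSymm.nullityM_add_edgeMatrix_lt_of_ne (hM : M.IsSymm) {u v : V}
    {x c : V → ZMod 2} (hx : M *ᵥ x = 0) (hxu : x u = 1) (hc : M *ᵥ c = M.diag)
    (hcv : c v ≠ x v * c u) :
    nullityM (M + edgeMatrix u v) < nullityM M := by
  refine nullityM_add_edgeMatrix_lt hx (by simp [hxu]) fun y hy => ?_
  have hMy : M *ᵥ y = edgeMatrix u v *ᵥ y := funext fun w =>
    CharTwo.add_eq_zero.mp (by rw [← Pi.add_apply, ← add_mulVec, hy, Pi.zero_apply])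
  have hpair : ∀ a, y ⬝ᵥ M *ᵥ a = a u * y v + a v * y u := fun a => by
    rw [dotProduct_mulVec, ← mulVec_transpose, hM.eq, hMy, dotProduct_comm,
      dotProduct_edgeMatrix_mulVec]
  have hxy : x u * y v + x v * y u = 0 := by rw [← hpair, hx, dotProduct_zero]
  have hcy : c u * y v + c v * y u = 0 := by
    rw [← hpair, hc, ← hM.dotProduct_mulVec_self, hpair, mul_comm (y v)]
    exact CharTwo.add_self_eq_zero _
  -- `hxy` gives `y v = x v * y u`, and then `hcy` reads `(x v * c u + c v) * y u = 0`,
  -- whose coefficient is `1` by `hcv`.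
  revert hxu hcv hxy hcy
  generalize x u = xu, x v = xv, c u = cu, c v = cv, y u = yu, y v = yv
  revert xu xv cu cv yu yv
  decide

theorem Matrix.IsSymm.exists_nullityM_add_edgeMatrix_lt (hM : M.IsSymm) {x : V → ZMod 2}
    (hx : M *ᵥ x = 0) {u : V} (hxu : x u = 1) (hMu : M u u = 1) :
    ∃ v, v ≠ u ∧ M u v = 1 ∧ nullityM (M + edgeMatrix u v) < nullityM M := by
  obtain ⟨c, hc⟩ := hM.exists_mulVec_eq_diag
  by_contra! hbad
  set d := c - c u • x
  have hd : ∀ v, M u v * d v = 0 := by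
    intro v
    by_cases hvu : v = u
    · simp [d, hvu, hxu]
    by_cases hMuv : M u v = 0
    · rw [hMuv, zero_mul]
    have hcv : c v = x v * c u := by
      by_contra hcv
      exact (hbad v hvu (Fin.eq_one_of_ne_zero _ hMuv)).not_gt
        (hM.nullityM_add_edgeMatrix_lt_of_ne hx hxu hc hcv)
    simp [d, hcv, mul_comm]
  have hMd : (M *ᵥ d) u = 0 := Finset.sum_eq_zero fun v _ => hd v
  rw [mulVec_sub, mulVec_smul, hx, smul_zero, sub_zero, hc, diag_apply, hMu] at hMd
  exact one_ne_zero hMd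

end ZModTwo

section Graph

variable (G : SimpleGraph V)

theorem isSymm_nbhdMatrix : (nbhdMatrix G).IsSymm :=
  Matrix.IsSymm.ext fun u v => by simp [nbhdMatrix, eq_comm, G.adj_comm]

theorem nbhdMatrix_apply_self (v : V) : nbhdMatrix G v v = 1 := by
  simp [nbhdMatrix]

theorem nbhdMatrix_apply_of_ne {u v : V} (huv : u ≠ v) :
    nbhdMatrix G u v = if G.Adj u v then 1 else 0 := by
  simp [nbhdMatrix, huv]

theorem nbhdMatrix_deleteEdges {u v : V} (huv : G.Adj u v) :
    nbhdMatrix (G.deleteEdges {s(u, v)}) = nbhdMatrix G + edgeMatrix u v := by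
  ext a b
  simp only [nbhdMatrix, edgeMatrix, single_apply, SimpleGraph.deleteEdges_adj,
    Set.mem_singleton_iff, Sym2.eq_iff, of_apply, Matrix.add_apply]
  by_cases h1 : u = a ∧ v = b
  · obtain ⟨rfl, rfl⟩ := h1
    simp [huv, huv.ne, huv.ne.symm, CharTwo.add_self_eq_zero]
  by_cases h2 : v = a ∧ u = b
  · obtain ⟨rfl, rfl⟩ := h2
    simp [huv.symm, huv.ne, huv.ne.symm, CharTwo.add_self_eq_zero]
  have h : ¬(a = u ∧ b = v ∨ a = v ∧ b = u) := by
    rintro (⟨rfl, rfl⟩ | ⟨rfl, rfl⟩) <;> simp_all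
  simp [h, h1, h2]

end Graph

end

/-- If `ν(G) > 0`, there is an edge `uv` whose removal strictly decreases the nullity. -/
theorem stmt0 {V : Type*} [Fintype V] (G : SimpleGraph V)
    (h : 0 < graphNullity G) :
    ∃ u v : V, G.Adj u v ∧
      graphNullity (G.deleteEdges {s(u, v)}) < graphNullity G := by
  obtain ⟨⟨x, hx⟩, hx0⟩ := Module.finrank_pos_iff_exists_ne_zero.mp h
  obtain ⟨u, hxu⟩ := Function.ne_iff.mp (Subtype.coe_ne_coe.mpr hx0)
  obtain ⟨v, hvu, hGuv, hlt⟩ := (isSymm_nbhdMatrix G).exists_nullityM_add_edgeMatrix_lt hx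
    (Fin.eq_one_of_ne_zero _ hxu) (nbhdMatrix_apply_self G u)
  have hadj : G.Adj u v := by
    simpa [nbhdMatrix_apply_of_ne G hvu.symm] using hGuv
  exact ⟨u, v, hadj, by rwa [graphNullity, nbhdMatrix_deleteEdges G hadj]⟩
end

section
/- If G is a simple graph on a finite vertex set with ν(G) ≥ 2, then either there exist adjacent vertices u, v of G with ν(G − uv) = ν(G) − 2, or there exist distinct non-adjacent vertices u, v of G with ν(G + uv) = ν(G) − 2. -/
open Matrix
open scoped Classical

/-!
Perturbing a symmetric matrix `M` by `c ≠ 0` in the two entries `(u, v)` and `(v, u)` adds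
`c x_v e_u + c x_u e_v` to `M x`. Since `M` is symmetric, every kernel vector of `M` is orthogonal
to `M x`; if `x ↦ (x u, x v)` maps `ker M` onto `K²`, these orthogonality relations force
`x u = x v = 0` for every `x` in the new kernel, which is therefore `ker M ∩ {x u = x v = 0}`,
of codimension two in `ker M`. When `ν(G) ≥ 2` such a pair `u ≠ v` exists, and over `ℤ₂` deleting
or adding the edge `uv` is exactly this perturbation with `c = 1`.
-/

open Module

theorem Submodule.finrank_inf_ker_add_finrank_map {K E F : Type*} [DivisionRing K]
    [AddCommGroup E] [Module K E] [AddCommGroup F] [Module K F]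
    (W : Submodule K E) [FiniteDimensional K W] (f : E →ₗ[K] F) :
    finrank K ↥(W ⊓ LinearMap.ker f) + finrank K ↥(W.map f) = finrank K W := by
  have h := LinearMap.finrank_range_add_finrank_ker (f.domRestrict W)
  rwa [LinearMap.range_domRestrict, LinearMap.ker_domRestrict,
    ← Submodule.finrank_map_subtype_eq, Submodule.map_comap_subtype, add_comm] at h

section EvalPair

variable {V K : Type*} [Field K]

def evalPair (u v : V) : (V → K) →ₗ[K] K × K :=
  (LinearMap.proj u).prod (LinearMap.proj v)

@[simp]
theorem evalPair_apply (u v : V) (x : V → K) : evalPair u v x = (x u, x v) := rfl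

theorem exists_map_evalPair_eq_top (W : Submodule K (V → K)) [FiniteDimensional K W]
    (hW : 2 ≤ finrank K W) : ∃ u v, u ≠ v ∧ W.map (evalPair u v) = ⊤ := by
  obtain ⟨a, haW, ha⟩ : ∃ a ∈ W, a ≠ 0 :=
    Submodule.exists_mem_ne_zero_of_ne_bot (Submodule.one_le_finrank_iff.mp (by omega))
  obtain ⟨u, hau⟩ : ∃ u, a u ≠ 0 := Function.ne_iff.mp ha
  have hker : 1 ≤ finrank K ↥(W ⊓ LinearMap.ker (LinearMap.proj u : (V → K) →ₗ[K] K)) := by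
    have := W.finrank_inf_ker_add_finrank_map (LinearMap.proj u)
    have : finrank K ↥(W.map (LinearMap.proj u : (V → K) →ₗ[K] K)) ≤ 1 :=
      (Submodule.finrank_le _).trans (finrank_self K).le
    omega
  obtain ⟨b, ⟨hbW, hbu⟩, hb⟩ := Submodule.exists_mem_ne_zero_of_ne_bot
    (Submodule.one_le_finrank_iff.mp hker)
  replace hbu : b u = 0 := hbu
  obtain ⟨v, hbv⟩ : ∃ v, b v ≠ 0 := Function.ne_iff.mp hb
  refine ⟨u, v, by rintro rfl; exact hbv hbu, eq_top_iff.mpr fun p _ => ?_⟩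
  set α := p.1 / a u
  refine ⟨α • a + ((p.2 - α * a v) / b v) • b,
    W.add_mem (W.smul_mem _ haW) (W.smul_mem _ hbW), ?_⟩
  ext
  · simp [hbu, α, hau]
  · simp [hbu, α, hbv]

theorem mulVec_add_single_add_single [Fintype V] [DecidableEq V] (M : Matrix V V K) (c : K)
    (u v : V) (x : V → K) :
    (M + (Matrix.single u v c + Matrix.single v u c)) *ᵥ x =
      M *ᵥ x + (Pi.single u (c * x v) + Pi.single v (c * x u)) := by
  simp only [Matrix.add_mulVec, Matrix.single_mulVec]
  rfl

theorem ker_mulVecLin_add_single_add_single [Fintype V] [DecidableEq V] {M : Matrix V V K}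
    (hM : M.IsSymm) {c : K} (hc : c ≠ 0) {u v : V}
    (hsurj : (LinearMap.ker M.mulVecLin).map (evalPair u v) = ⊤) :
    LinearMap.ker (M + (Matrix.single u v c + Matrix.single v u c)).mulVecLin =
      LinearMap.ker M.mulVecLin ⊓ LinearMap.ker (evalPair u v) := by
  ext x
  simp only [Submodule.mem_inf, LinearMap.mem_ker, Matrix.mulVecLin_apply, evalPair_apply,
    Prod.mk_eq_zero, mulVec_add_single_add_single]
  refine ⟨fun hx => ?_, fun ⟨hMx, hxu, hxv⟩ => by simp [hMx, hxu, hxv]⟩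
  have horth : ∀ k, M *ᵥ k = 0 → k u * (c * x v) + k v * (c * x u) = 0 := by
    intro k hk
    have hkM : k ⬝ᵥ M *ᵥ x = 0 := by
      rw [dotProduct_mulVec, ← mulVec_transpose, hM.eq, hk, zero_dotProduct]
    simpa [dotProduct_add, hkM] using congrArg (k ⬝ᵥ ·) hx
  have hpre : ∀ p : K × K, ∃ k, M *ᵥ k = 0 ∧ k u = p.1 ∧ k v = p.2 := fun p => by
    obtain ⟨k, hk, hkp⟩ := (hsurj ▸ Submodule.mem_top : p ∈ _)
    exact ⟨k, hk, by simp [← hkp]⟩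
  obtain ⟨a, ha, hau, hav⟩ := hpre (1, 0)
  obtain ⟨b, hb, hbu, hbv⟩ := hpre (0, 1)
  have hxv : x v = 0 := by simpa [hau, hav, hc] using horth a ha
  have hxu : x u = 0 := by simpa [hbu, hbv, hc] using horth b hb
  simpa [hxu, hxv] using hx

end EvalPair

namespace SimpleGraph

variable {V : Type*}

open scoped symmDiff

theorem deleteEdges_edge_eq_symmDiff {G : SimpleGraph V} {u v : V} (h : G.Adj u v) :
    G.deleteEdges {s(u, v)} = G ∆ fromEdgeSet {s(u, v)} :=
  (symmDiff_of_ge (G.fromEdgeSet_le.mpr (by simp [h]))).symm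

theorem sup_fromEdgeSet_eq_symmDiff {G : SimpleGraph V} {u v : V} (h : ¬G.Adj u v) :
    G ⊔ fromEdgeSet {s(u, v)} = G ∆ fromEdgeSet {s(u, v)} :=
  (Disjoint.symmDiff_eq_sup ((G.disjoint_fromEdgeSet _).mpr (by simpa using h))).symm

theorem adjMatrix_symmDiff (R : Type*) [AddMonoidWithOne R] [CharP R 2] (G H : SimpleGraph V)
    [DecidableRel G.Adj] [DecidableRel H.Adj] [DecidableRel (G ∆ H).Adj] :
    (G ∆ H).adjMatrix R = G.adjMatrix R + H.adjMatrix R := by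
  ext w y
  rw [Matrix.add_apply, adjMatrix_apply, adjMatrix_apply, adjMatrix_apply]
  by_cases hG : G.Adj w y <;> by_cases hH : H.Adj w y <;>
    simp [symmDiff_def, hG, hH, one_add_one_eq_two, CharTwo.two_eq_zero]

theorem adjMatrix_fromEdgeSet_singleton [DecidableEq V] (R : Type*) [AddZeroClass R] [One R]
    {u v : V} [DecidableRel (fromEdgeSet {s(u, v)}).Adj] (huv : u ≠ v) :
    (fromEdgeSet {s(u, v)}).adjMatrix R = Matrix.single u v 1 + Matrix.single v u 1 := by
  ext w y
  simp only [adjMatrix_apply, fromEdgeSet_adj, Set.mem_singleton_iff, Sym2.eq_iff,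
    Matrix.add_apply, Matrix.single_apply]
  split_ifs <;> grind [add_zero, zero_add]

end SimpleGraph

section GraphNullity

open SimpleGraph
open scoped symmDiff

variable {V : Type*} [Fintype V]

theorem nbhdMatrix_eq_one_add_adjMatrix [DecidableEq V] (G : SimpleGraph V)
    [DecidableRel G.Adj] :
    nbhdMatrix G = 1 + G.adjMatrix (ZMod 2) := by
  ext w y
  rw [nbhdMatrix, Matrix.of_apply, Matrix.add_apply, Matrix.one_apply, adjMatrix_apply]
  by_cases hwy : w = y
  · simp [hwy]
  · by_cases hadj : G.Adj w y <;> simp [hwy, hadj]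

theorem nbhdMatrix_isSymm (G : SimpleGraph V) : (nbhdMatrix G).IsSymm := by
  rw [nbhdMatrix_eq_one_add_adjMatrix]
  exact Matrix.isSymm_one.add G.isSymm_adjMatrix

theorem nbhdMatrix_symmDiff_edge (G : SimpleGraph V) {u v : V} (huv : u ≠ v) :
    nbhdMatrix (G ∆ fromEdgeSet {s(u, v)}) =
      nbhdMatrix G + (Matrix.single u v 1 + Matrix.single v u 1) := by
  rw [nbhdMatrix_eq_one_add_adjMatrix, nbhdMatrix_eq_one_add_adjMatrix, adjMatrix_symmDiff,
    adjMatrix_fromEdgeSet_singleton _ huv, add_assoc]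

theorem graphNullity_symmDiff_edge (G : SimpleGraph V) {u v : V} (huv : u ≠ v)
    (hsurj : (LinearMap.ker (nbhdMatrix G).mulVecLin).map (evalPair u v) = ⊤) :
    graphNullity (G ∆ fromEdgeSet {s(u, v)}) = graphNullity G - 2 := by
  have hrank := (LinearMap.ker (nbhdMatrix G).mulVecLin).finrank_inf_ker_add_finrank_map
    (evalPair u v)
  rw [hsurj, finrank_top, finrank_prod, finrank_self] at hrank
  rw [graphNullity, graphNullity, nullityM, nullityM, nbhdMatrix_symmDiff_edge G huv,
    ker_mulVecLin_add_single_add_single (nbhdMatrix_isSymm G) one_ne_zero hsurj]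
  omega

end GraphNullity

/-- If `ν(G) ≥ 2`, then either some edge removal or some edge addition
decreases the nullity by exactly `2`. -/
theorem stmt1 {V : Type*} [Fintype V] (G : SimpleGraph V)
    (h : 2 ≤ graphNullity G) :
    (∃ u v : V, G.Adj u v ∧
      graphNullity (G.deleteEdges {s(u, v)}) = graphNullity G - 2) ∨
    (∃ u v : V, u ≠ v ∧ ¬ G.Adj u v ∧
      graphNullity (G ⊔ SimpleGraph.fromEdgeSet {s(u, v)}) = graphNullity G - 2) := by
  obtain ⟨u, v, huv, hsurj⟩ :=
    exists_map_evalPair_eq_top (LinearMap.ker (nbhdMatrix G).mulVecLin) h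
  by_cases hadj : G.Adj u v
  · left
    refine ⟨u, v, hadj, ?_⟩
    rw [SimpleGraph.deleteEdges_edge_eq_symmDiff hadj, graphNullity_symmDiff_edge G huv hsurj]
  · right
    refine ⟨u, v, huv, hadj, ?_⟩
    rw [SimpleGraph.sup_fromEdgeSet_eq_symmDiff hadj, graphNullity_symmDiff_edge G huv hsurj]
end

section
/- Suppose G is always solvable (ν(G) = 0) and for every edge uv of G one has ν(G − uv) > 0 (removal of every edge increases the nullity). Then every always activated vertex of G has even degree and every never activated vertex of G has odd degree. -/
open Matrix
open scoped Classical

/-- A vertex `v` is always activated: `x_{v}` is solvable and `x_{v} · s = 1` for every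
odd dominating pattern `s`. -/
def alwaysActivated {V : Type*} [Fintype V] (G : SimpleGraph V) (v : V) : Prop :=
  Solv (nbhdMatrix G) (chi {v}) ∧
    ∀ s : V → ZMod 2, (nbhdMatrix G).mulVec s = 1 → chi ({v} : Set V) ⬝ᵥ s = 1

/-- A vertex `v` is never activated: `x_{v}` is solvable and `x_{v} · s = 0` for every
odd dominating pattern `s`. -/
def neverActivated {V : Type*} [Fintype V] (G : SimpleGraph V) (v : V) : Prop :=
  Solv (nbhdMatrix G) (chi {v}) ∧
    ∀ s : V → ZMod 2, (nbhdMatrix G).mulVec s = 1 → chi ({v} : Set V) ⬝ᵥ s = 0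

section helpers
variable {V : Type*} [Fintype V] (G : SimpleGraph V)

lemma zmod2_sq : ∀ z : ZMod 2, z * z = z := by decide

lemma chi_dot (v : V) (y : V → ZMod 2) : chi {v} ⬝ᵥ y = y v := by
  simp [chi, dotProduct]

lemma dot_chi (v : V) (y : V → ZMod 2) : y ⬝ᵥ chi {v} = y v := by
  simp [chi, dotProduct]

lemma nbhd_symm : (nbhdMatrix G)ᵀ = nbhdMatrix G := by
  ext u v
  simp only [nbhdMatrix, Matrix.transpose_apply, Matrix.of_apply]
  congr 1
  exact propext (or_congr eq_comm (G.adj_comm _ _))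

lemma nbhd_symm' (u v : V) : nbhdMatrix G u v = nbhdMatrix G v u := by
  conv_lhs => rw [← nbhd_symm G]
  rw [Matrix.transpose_apply]

lemma dot_mulVec_symm (x y : V → ZMod 2) :
    x ⬝ᵥ (nbhdMatrix G) *ᵥ y = ((nbhdMatrix G) *ᵥ x) ⬝ᵥ y := by
  rw [Matrix.dotProduct_mulVec, ← Matrix.mulVec_transpose, nbhd_symm]

lemma qf (x : V → ZMod 2) : x ⬝ᵥ (nbhdMatrix G) *ᵥ x = ∑ w, x w := by
  have key : x ⬝ᵥ (nbhdMatrix G) *ᵥ x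
      = ∑ p ∈ Finset.univ ×ˢ Finset.univ, x p.1 * nbhdMatrix G p.1 p.2 * x p.2 := by
    rw [Finset.sum_product]
    simp [dotProduct, mulVec, Finset.mul_sum, mul_assoc]
  rw [key, ← Finset.diag_union_offDiag Finset.univ,
    Finset.sum_union (Finset.disjoint_diag_offDiag _), Finset.sum_diag]
  have h1 : ∑ i : V, x i * nbhdMatrix G i i * x i = ∑ w, x w := by
    apply Finset.sum_congr rfl
    intro w _
    simp [nbhdMatrix, zmod2_sq]
  have h2 : ∑ p ∈ Finset.univ.offDiag, x p.1 * nbhdMatrix G p.1 p.2 * x p.2 = 0 := by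
    refine Finset.sum_involution (fun p _ => p.swap) ?_ ?_ ?_ ?_
    · intro p _
      simp only [Prod.fst_swap, Prod.snd_swap, nbhd_symm' G p.2 p.1]
      rw [show x p.2 * nbhdMatrix G p.1 p.2 * x p.1 = x p.1 * nbhdMatrix G p.1 p.2 * x p.2
        from by ring]
      exact CharTwo.add_self_eq_zero _
    · intro p hp _ hcon
      have : p.1 = p.2 := by
        have := congrArg Prod.fst hcon
        simpa using this.symm
      exact (Finset.mem_offDiag.mp hp).2.2 this
    · intro p hp
      have h := Finset.mem_offDiag.mp hp
      exact Finset.mem_offDiag.mpr ⟨Finset.mem_univ _, Finset.mem_univ _, fun e => h.2.2 e.symm⟩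
    · intro p _
      exact Prod.swap_swap p
  rw [h1, h2, add_zero]

lemma row_expand [DecidableRel G.Adj] (y : V → ZMod 2) (v : V) :
    ((nbhdMatrix G) *ᵥ y) v = y v + ∑ u ∈ G.neighborFinset v, y u := by
  have step : ((nbhdMatrix G) *ᵥ y) v
      = ∑ z, ((if v = z then y z else 0) + (if G.Adj v z then y z else 0)) := by
    simp only [mulVec, dotProduct, nbhdMatrix, Matrix.of_apply]
    apply Finset.sum_congr rfl
    intro z _
    by_cases h : v = z
    · subst h
      simp [SimpleGraph.irrefl]
    · simp [h]
  rw [step, Finset.sum_add_distrib]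
  congr 1
  · simp
  · rw [SimpleGraph.neighborFinset_eq_filter, Finset.sum_filter]

lemma zmod2_key : ∀ xu xv su sv β : ZMod 2,
    xu = xv * su + xu * β → xv = xv * β + xu * sv → ¬(xu = 0 ∧ xv = 0) →
    β = 1 + su * sv := by decide

lemma entry_del (u v : V) (huv : G.Adj u v) (w z : V) :
    nbhdMatrix G w z = nbhdMatrix (G.deleteEdges {s(u, v)}) w z
      + (if (w = u ∧ z = v) ∨ (w = v ∧ z = u) then 1 else 0) := by
  have hne : u ≠ v := G.ne_of_adj huv
  have hAdjR : ((w = u ∧ z = v) ∨ (w = v ∧ z = u)) → G.Adj w z := by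
    rintro (⟨rfl, rfl⟩ | ⟨rfl, rfl⟩)
    exacts [huv, huv.symm]
  have hneR : ((w = u ∧ z = v) ∨ (w = v ∧ z = u)) → w ≠ z := by
    rintro (⟨rfl, rfl⟩ | ⟨rfl, rfl⟩)
    exacts [hne, hne.symm]
  simp only [nbhdMatrix, Matrix.of_apply, SimpleGraph.deleteEdges_adj,
    Set.mem_singleton_iff, Sym2.eq_iff]
  split_ifs <;> first | decide | tauto

lemma mulVec_del (u v : V) (huv : G.Adj u v) (x : V → ZMod 2)
    (hx : (nbhdMatrix (G.deleteEdges {s(u, v)})) *ᵥ x = 0) :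
    (nbhdMatrix G) *ᵥ x = x v • chi {u} + x u • chi {v} := by
  have hne : u ≠ v := G.ne_of_adj huv
  funext w
  have h1 : ((nbhdMatrix G) *ᵥ x) w
      = ((nbhdMatrix (G.deleteEdges {s(u, v)})) *ᵥ x) w
        + ∑ z, (if (w = u ∧ z = v) ∨ (w = v ∧ z = u) then 1 else 0) * x z := by
    simp only [mulVec, dotProduct]
    rw [← Finset.sum_add_distrib]
    apply Finset.sum_congr rfl
    intro z _
    rw [entry_del G u v huv w z, add_mul]
  rw [h1, hx]
  simp only [Pi.zero_apply, zero_add, Pi.add_apply, Pi.smul_apply, smul_eq_mul]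
  by_cases hwu : w = u
  · subst hwu
    simp [hne, chi, Finset.sum_ite_eq']
  · by_cases hwv : w = v
    · subst hwv
      simp [Ne.symm hne, hne, chi, Finset.sum_ite_eq']
    · simp [hwu, hwv, chi]

lemma zmod2_cancel : ∀ a b c : ZMod 2, a + b = c → b = c + a := by decide

lemma zmod2_final : ∀ sv d : ZMod 2, sv + (d + (1 + sv) * sv) = 1 → d = 1 + sv := by decide

end helpers

/-- If `G` is always solvable and the removal of every edge increases the nullity, then
every always activated vertex has even degree and every never activated vertex has odd
degree. -/
theorem stmt3 {V : Type*} [Fintype V] (G : SimpleGraph V) [DecidableRel G.Adj]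
    (h0 : graphNullity G = 0)
    (h1 : ∀ u v : V, G.Adj u v → 0 < graphNullity (G.deleteEdges {s(u, v)})) :
    (∀ v : V, alwaysActivated G v → Even (G.degree v)) ∧
    (∀ v : V, neverActivated G v → Odd (G.degree v)) := by
  have h0' : Module.finrank (ZMod 2) (LinearMap.ker (nbhdMatrix G).mulVecLin) = 0 := h0
  have hker : LinearMap.ker (nbhdMatrix G).mulVecLin = ⊥ := Submodule.finrank_eq_zero.mp h0'
  have hinj : Function.Injective (nbhdMatrix G).mulVecLin := LinearMap.ker_eq_bot.mp hker
  have hsurj : Function.Surjective (nbhdMatrix G).mulVecLin :=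
    LinearMap.injective_iff_surjective.mp hinj
  obtain ⟨s, hs⟩ := hsurj 1
  rw [Matrix.mulVecLin_apply] at hs
  have claimA : ∀ (w : V) (b : V → ZMod 2), (nbhdMatrix G) *ᵥ b = chi {w} → b w = s w := by
    intro w b hb
    calc b w = (nbhdMatrix G *ᵥ b) ⬝ᵥ b := by rw [hb, chi_dot]
    _ = b ⬝ᵥ (nbhdMatrix G *ᵥ b) := dotProduct_comm _ _
    _ = ∑ z, b z := qf G b
    _ = b ⬝ᵥ (1 : V → ZMod 2) := by simp [dotProduct]
    _ = b ⬝ᵥ (nbhdMatrix G *ᵥ s) := by rw [hs]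
    _ = (nbhdMatrix G *ᵥ b) ⬝ᵥ s := dot_mulVec_symm G b s
    _ = s w := by rw [hb, chi_dot]
  have key : ∀ v : V, (G.degree v : ZMod 2) = 1 + s v := by
    intro v
    obtain ⟨b, hb⟩ := hsurj (chi {v})
    rw [Matrix.mulVecLin_apply] at hb
    have hbv : b v = s v := claimA v b hb
    have hBu : ∀ u ∈ G.neighborFinset v, b u = 1 + s u * s v := by
      intro u hu
      rw [SimpleGraph.mem_neighborFinset] at hu
      have huv : G.Adj u v := hu.symm
      have hpos := h1 u v huv
      have hne_bot :
          LinearMap.ker (nbhdMatrix (G.deleteEdges {s(u, v)})).mulVecLin ≠ ⊥ := by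
        intro hcon
        have : graphNullity (G.deleteEdges {s(u, v)}) = 0 := by
          show Module.finrank (ZMod 2)
            (LinearMap.ker (nbhdMatrix (G.deleteEdges {s(u, v)})).mulVecLin) = 0
          rw [hcon]
          exact finrank_bot _ _
        omega
      obtain ⟨x, hxker, hx0⟩ := (Submodule.ne_bot_iff _).mp hne_bot
      have hxker' : (nbhdMatrix (G.deleteEdges {s(u, v)})) *ᵥ x = 0 := hxker
      have hxrel := mulVec_del G u v huv x hxker'
      obtain ⟨a, ha⟩ := hsurj (chi {u})
      rw [Matrix.mulVecLin_apply] at ha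
      have hx_eq : x = x v • a + x u • b := by
        apply hinj
        show nbhdMatrix G *ᵥ x = (nbhdMatrix G).mulVecLin _
        rw [map_add, LinearMap.map_smul, LinearMap.map_smul, Matrix.mulVecLin_apply,
          Matrix.mulVecLin_apply, ha, hb, hxrel]
      have e1 : x u = x v * a u + x u * b u := by
        have := congrFun hx_eq u
        simpa using this
      have e2 : x v = x v * a v + x u * b v := by
        have := congrFun hx_eq v
        simpa using this
      have hau : a u = s u := claimA u a ha
      have hav : a v = b u := by
        calc a v = chi {v} ⬝ᵥ a := (chi_dot v a).symm
        _ = (nbhdMatrix G *ᵥ b) ⬝ᵥ a := by rw [hb]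
        _ = b ⬝ᵥ (nbhdMatrix G *ᵥ a) := (dot_mulVec_symm G b a).symm
        _ = b ⬝ᵥ chi {u} := by rw [ha]
        _ = b u := dot_chi u b
      have hxne : ¬ (x u = 0 ∧ x v = 0) := by
        rintro ⟨hu0, hv0⟩
        apply hx0
        rw [hx_eq, hu0, hv0]
        simp
      rw [hau] at e1
      rw [hav, hbv] at e2
      exact zmod2_key (x u) (x v) (s u) (s v) (b u) e1 e2 hxne
    have hrowb : b v + ∑ u ∈ G.neighborFinset v, b u = 1 := by
      rw [← row_expand G b v, hb]
      simp [chi]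
    have hrows : s v + ∑ u ∈ G.neighborFinset v, s u = 1 := by
      rw [← row_expand G s v, hs]
      rfl
    have hsum : ∑ u ∈ G.neighborFinset v, s u = 1 + s v :=
      zmod2_cancel _ _ _ hrows
    rw [hbv, Finset.sum_congr rfl hBu, Finset.sum_add_distrib, ← Finset.sum_mul, hsum] at hrowb
    have hcard : ∑ _u ∈ G.neighborFinset v, (1 : ZMod 2) = (G.degree v : ZMod 2) := by
      rw [Finset.sum_const, nsmul_eq_mul, mul_one]
      rfl
    rw [hcard] at hrowb
    exact zmod2_final (s v) _ hrowb
  constructor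
  · intro v hv
    have hsv : s v = 1 := by
      have := hv.2 s hs
      rwa [chi_dot] at this
    have hd0 : (G.degree v : ZMod 2) = 0 := by rw [key v, hsv]; decide
    have := (ZMod.natCast_eq_zero_iff _ 2).mp hd0
    exact even_iff_two_dvd.mpr this
  · intro v hv
    have hsv : s v = 0 := by
      have := hv.2 s hs
      rwa [chi_dot] at this
    have hd1 : (G.degree v : ZMod 2) = 1 := by rw [key v, hsv]; decide
    rcases Nat.even_or_odd (G.degree v) with he | ho
    · exfalso
      have hd0 : (G.degree v : ZMod 2) = 0 :=
        (ZMod.natCast_eq_zero_iff _ 2).mpr (even_iff_two_dvd.mp he)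
      rw [hd0] at hd1
      exact absurd hd1 (by decide)
    · exact ho
end

section
/- Let G be always solvable (ν(G) = 0), let u be a vertex of G, let s be the unique odd dominating pattern of G, and let p be the unique solving pattern for x̄_{{u}}. Then x̄_{N[u]}·p = pr(s) if u is never activated, and x̄_{N[u]}·p = 1 + pr(s) (in ℤ₂) if u is always activated, where N[u] = {w ∈ V : w = u or w adjacent to u} is the closed neighborhood of u. -/
open Matrix
open scoped Classical

lemma nbhd_symm_s5 {V : Type*} [Fintype V] (G : SimpleGraph V) :
    (nbhdMatrix G)ᵀ = nbhdMatrix G := by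
  ext a b
  simp only [Matrix.transpose_apply, nbhdMatrix, Matrix.of_apply]
  congr 1
  simp [eq_comm, SimpleGraph.adj_comm]

lemma chi_single_dot {V : Type*} [Fintype V] (u : V) (x : V → ZMod 2) :
    chi ({u} : Set V) ⬝ᵥ x = x u := by
  simp [chi, dotProduct, Finset.sum_ite_eq, ite_mul]

/-- Lemma 6 of the paper: for an always solvable graph `G`, a vertex `u`, the odd
dominating pattern `s` and the solving pattern `p` for `x̄_{u}`, the value
`x̄_{N[u]} · p` equals `pr(s)` if `u` is never activated, and `1 + pr(s)` if `u` is
always activated. -/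
theorem stmt5 {V : Type*} [Fintype V] (G : SimpleGraph V) (u : V)
    (h0 : graphNullity G = 0) (s p : V → ZMod 2)
    (hs : (nbhdMatrix G).mulVec s = 1)
    (hp : (nbhdMatrix G).mulVec p = chi {u} + 1) :
    (neverActivated G u →
      (chi {w : V | w = u ∨ G.Adj u w} + 1) ⬝ᵥ p = (1 : V → ZMod 2) ⬝ᵥ s) ∧
    (alwaysActivated G u →
      (chi {w : V | w = u ∨ G.Adj u w} + 1) ⬝ᵥ p = 1 + (1 : V → ZMod 2) ⬝ᵥ s) := by
  have hsym : ∀ x y : V → ZMod 2,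
      ((nbhdMatrix G).mulVec x) ⬝ᵥ y = x ⬝ᵥ ((nbhdMatrix G).mulVec y) := by
    intro x y
    rw [Matrix.dotProduct_mulVec, ← Matrix.mulVec_transpose, nbhd_symm_s5,
      dotProduct_comm, Matrix.dotProduct_mulVec, ← Matrix.mulVec_transpose,
      nbhd_symm_s5, dotProduct_comm]
  have hNe : (nbhdMatrix G).mulVec (chi ({u} : Set V)) =
      chi {w : V | w = u ∨ G.Adj u w} := by
    ext w
    simp only [Matrix.mulVec, dotProduct, chi, Set.mem_singleton_iff,
      mul_ite, mul_one, mul_zero, Finset.sum_ite_eq', Finset.mem_univ, if_true]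
    simp only [nbhdMatrix, Matrix.of_apply, Set.mem_setOf_eq]
    congr 1
    simp [eq_comm, SimpleGraph.adj_comm]
  have key : (chi {w : V | w = u ∨ G.Adj u w} + 1) ⬝ᵥ p
      = s u + (1 : V → ZMod 2) ⬝ᵥ s := by
    have : (chi {w : V | w = u ∨ G.Adj u w} + 1)
        = (nbhdMatrix G).mulVec (chi ({u} : Set V) + s) := by
      rw [Matrix.mulVec_add, hNe, hs]
    rw [this, hsym, hp]
    simp only [dotProduct_add, add_dotProduct, chi_single_dot]
    rw [dotProduct_comm s (1 : V → ZMod 2),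
      dotProduct_comm s (chi ({u} : Set V)), chi_single_dot]
    have hc : chi ({u} : Set V) u = 1 := by simp [chi]
    have h11 : (1 : ZMod 2) + 1 = 0 := by decide
    simp only [hc, Pi.one_apply]
    linear_combination h11
  constructor
  · intro hn
    have := hn.2 s hs
    rw [chi_single_dot] at this
    rw [key, this, zero_add]
  · intro ha
    have := ha.2 s hs
    rw [chi_single_dot] at this
    rw [key, this]
end

section
/- For a simple graph G, if the configuration x is solvable, then x·p = 0 for every solving pattern p for x̄ (= x + 𝟏). -/
open Matrix
open scoped Classical

/-- In characteristic two, a symmetric double sum reduces to its diagonal. -/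
lemma sympair {V : Type*} [Fintype V] (f : V → V → ZMod 2) (hf : ∀ u v, f u v = f v u) :
    ∑ u, ∑ v, f u v = ∑ u, f u u := by
  classical
  rw [← Finset.sum_product']
  rw [← Finset.sum_filter_add_sum_filter_not (Finset.univ ×ˢ Finset.univ) (fun p => p.1 = p.2)]
  have h2 : ∑ p ∈ (Finset.univ ×ˢ Finset.univ).filter (fun p => ¬ p.1 = p.2), f p.1 p.2 = 0 := by
    apply Finset.sum_involution (fun p _ => (p.2, p.1))
    · intro p hp
      simp only [hf p.1 p.2]
      exact (CharTwo.add_self_eq_zero _)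
    · intro p hp _
      simp only [Finset.mem_filter] at hp
      intro h; apply hp.2; exact congrArg Prod.snd h
    · intro p hp
      simp only [Finset.mem_filter, Finset.mem_product] at *
      exact ⟨⟨Finset.mem_univ _, Finset.mem_univ _⟩, fun h => hp.2 h.symm⟩
    · intro p hp; rfl
  rw [h2, add_zero]
  apply Finset.sum_nbij' (fun p => p.1) (fun u => (u, u)) <;> simp +contextual [eq_comm]

/-- If the configuration `x` is solvable, then `x · p = 0` for every solving pattern `p`
for `x̄ = x + 𝟏`. -/
theorem stmt8 {V : Type*} [Fintype V] (G : SimpleGraph V) (x : V → ZMod 2)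
    (hx : Solv (nbhdMatrix G) x) :
    ∀ p : V → ZMod 2, (nbhdMatrix G).mulVec p = x + 1 → x ⬝ᵥ p = 0 := by
  intro p hp
  obtain ⟨q, hq⟩ := hx
  set M := nbhdMatrix G with hM
  have hMsymm : ∀ u v, M u v = M v u := by
    intro u v
    simp only [hM, nbhdMatrix, Matrix.of_apply]
    rw [G.adj_comm, @eq_comm _ u v]
  have hdiag : ∀ v, M v v = 1 := by intro v; simp [hM, nbhdMatrix]
  have sq : ∀ a : ZMod 2, a * a = a := by decide
  have hself : ∀ r : V → ZMod 2, r ⬝ᵥ M.mulVec r = ∑ v, r v := by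
    intro r
    have key := sympair (fun u v => r u * (M u v * r v))
      (by intro u v; rw [hMsymm u v]; ring)
    simp only [dotProduct, mulVec, dotProduct, Finset.mul_sum]
    rw [key]
    apply Finset.sum_congr rfl
    intro v _
    rw [hdiag v, one_mul, sq]
  have hsymdot : ∀ a b : V → ZMod 2, a ⬝ᵥ M.mulVec b = b ⬝ᵥ M.mulVec a := by
    intro a b
    simp only [dotProduct, mulVec, dotProduct, Finset.mul_sum]
    rw [Finset.sum_comm]
    apply Finset.sum_congr rfl; intro u _
    apply Finset.sum_congr rfl; intro v _
    rw [hMsymm]; ring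
  calc x ⬝ᵥ p = (M.mulVec q) ⬝ᵥ p := by rw [hq]
    _ = p ⬝ᵥ M.mulVec q := dotProduct_comm _ _
    _ = q ⬝ᵥ M.mulVec p := hsymdot p q
    _ = q ⬝ᵥ (x + 1) := by rw [hp]
    _ = q ⬝ᵥ x + q ⬝ᵥ (fun _ => 1) := dotProduct_add _ _ _
    _ = q ⬝ᵥ M.mulVec q + ∑ v, q v := by rw [← hq]; congr 1; simp [dotProduct]
    _ = ∑ v, q v + ∑ v, q v := by rw [hself]
    _ = 0 := CharTwo.add_self_eq_zero _
end

section
/- Let A₁ be a NO set and A₂ be an AO set in G, with A₁ and A₂ disjoint, and suppose A₂ is x̄_{A₁}-AO in G. Then for any pattern p, N(G*)p = 𝟏 if and only if N(G)p = x̄_{A₁}. Moreover, A₁ is NO and A₂ is AO in G*, and ν(G*) = ν(G). -/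
open Matrix
open scoped Classical

/-- `A` is `c`-always odd activated: `A` is solvable and `x_A · p = 1` for every solving
pattern `p` for `c`. -/
def cAO {V : Type*} [Fintype V] (M : Matrix V V (ZMod 2)) (c : V → ZMod 2)
    (A : Set V) : Prop :=
  Solv M (chi A) ∧ ∀ p : V → ZMod 2, M.mulVec p = c → chi A ⬝ᵥ p = 1

/-- `A` is `c`-never odd activated: `A` is solvable and `x_A · p = 0` for every solving
pattern `p` for `c`. -/
def cNO {V : Type*} [Fintype V] (M : Matrix V V (ZMod 2)) (c : V → ZMod 2)
    (A : Set V) : Prop :=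
  Solv M (chi A) ∧ ∀ p : V → ZMod 2, M.mulVec p = c → chi A ⬝ᵥ p = 0

/-- `A` is always odd activated (AO): `𝟏`-always odd activated. -/
def AO {V : Type*} [Fintype V] (M : Matrix V V (ZMod 2)) (A : Set V) : Prop :=
  cAO M 1 A

/-- `A` is never odd activated (NO): `𝟏`-never odd activated. -/
def NO {V : Type*} [Fintype V] (M : Matrix V V (ZMod 2)) (A : Set V) : Prop :=
  cNO M 1 A

/-- `A` is half odd activated (HO): `x_A` is not solvable. -/
def HO {V : Type*} [Fintype V] (M : Matrix V V (ZMod 2)) (A : Set V) : Prop :=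
  ¬ Solv M (chi A)

/-- The closed neighborhood matrix of the graph `G*` obtained from `G` by toggling every
pair of vertices between the disjoint sets `A₁` and `A₂`:
`N(G*) = N(G) + x_{A₁} x_{A₂}ᵗ + x_{A₂} x_{A₁}ᵗ` over `ℤ₂`. -/
noncomputable def starMatrix {V : Type*} [Fintype V] (G : SimpleGraph V)
    (A₁ A₂ : Set V) : Matrix V V (ZMod 2) :=
  nbhdMatrix G + Matrix.vecMulVec (chi A₁) (chi A₂) + Matrix.vecMulVec (chi A₂) (chi A₁)

/-!
Let `q₁, q₂, r` solve `x_{A₁}, x_{A₂}, 𝟏` in `G` (`𝟏` is solvable by Sutner's theorem). As `N(G)` is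
symmetric with unit diagonal, `q ⬝ N q = 𝟏 ⬝ q` over `ℤ₂`, which turns the NO hypothesis into
`x_{A₁} ⬝ q₁ = 0`; the `x̄_{A₁}`-AO hypothesis applied to `q₁ + r` gives `x_{A₂} ⬝ q₁ = 0`.
Pairing `N(G*) p = N(G) p + (x_{A₂} ⬝ p) x_{A₁} + (x_{A₁} ⬝ p) x_{A₂}` with `q₁` and `q₂` then
recovers `x_{A₁} ⬝ p` and `x_{A₂} ⬝ p`, so the rank-two correction is determined by `N(G*) p`:
the kernels agree, and `N(G*) p = 𝟏` forces `x_{A₁} ⬝ p = 0`, `x_{A₂} ⬝ p = 1`, i.e.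
`N(G) p = x̄_{A₁}`. Solvability transfers since for a symmetric matrix the range is the orthogonal
complement of the kernel.
-/

namespace Matrix

variable {ι : Type*}

section Symmetric

variable [Fintype ι]

theorem IsSymm.dotProduct_mulVec_comm {R : Type*} [CommRing R] {M : Matrix ι ι R}
    (hM : M.IsSymm) (x y : ι → R) : x ⬝ᵥ M *ᵥ y = M *ᵥ x ⬝ᵥ y := by
  rw [dotProduct_mulVec, ← mulVec_transpose, hM.eq]

theorem IsSymm.exists_mulVec_eq_iff {K : Type*} [Field K] {M : Matrix ι ι K} (hM : M.IsSymm)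
    (c : ι → K) : (∃ p, M *ᵥ p = c) ↔ ∀ y, M *ᵥ y = 0 → c ⬝ᵥ y = 0 := by
  constructor
  · rintro ⟨p, rfl⟩ y hy
    rw [← hM.dotProduct_mulVec_comm, hy, dotProduct_zero]
  · intro h
    by_contra hc
    obtain ⟨φ, hφc, hφM⟩ := Submodule.exists_dual_map_eq_bot_of_notMem
      (p := LinearMap.range M.mulVecLin) (x := c) (by simpa using hc) inferInstance
    set y : ι → K := fun i => φ fun j => if i = j then 1 else 0
    have hφ : ∀ x, φ x = x ⬝ᵥ y := fun x => by
      rw [φ.pi_apply_eq_sum_univ]; rfl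
    have hy : M *ᵥ y = 0 := by
      ext i
      have := LinearMap.le_ker_iff_map.mpr hφM ⟨Pi.single i 1, rfl⟩
      rwa [LinearMap.mem_ker, mulVecLin_apply, hφ, ← hM.dotProduct_mulVec_comm, single_dotProduct,
        one_mul] at this
    exact hφc (by rw [hφ]; exact h y hy)

-- Over `ℤ₂` the cross terms of `(x + y) ⬝ M (x + y)` cancel, so the quadratic form is additive.
theorem IsSymm.dotProduct_mulVec_self_s13 {M : Matrix ι ι (ZMod 2)} (hM : M.IsSymm)
    (y : ι → ZMod 2) : y ⬝ᵥ M *ᵥ y = diag M ⬝ᵥ y := by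
  let Q : (ι → ZMod 2) →+ ZMod 2 := AddMonoidHom.mk' (fun y => y ⬝ᵥ M *ᵥ y) fun x y => by
    simp only [mulVec_add, dotProduct_add, add_dotProduct]
    linear_combination CharTwo.add_self_eq_zero (x ⬝ᵥ M *ᵥ y) + dotProduct_comm (M *ᵥ y) x
      + hM.dotProduct_mulVec_comm y x
  let D : (ι → ZMod 2) →+ ZMod 2 :=
    AddMonoidHom.mk' (fun y => diag M ⬝ᵥ y) fun x y => dotProduct_add _ _ _
  refine DFunLike.congr_fun (AddMonoidHom.functions_ext _ Q D fun i x => ?_) y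
  have hx : x * x = x := by fin_cases x <;> rfl
  simp only [Q, D, AddMonoidHom.mk'_apply, mulVec_single, op_smul_eq_smul, dotProduct_smul,
    single_dotProduct, col_apply, smul_eq_mul, dotProduct_single, diag_apply]
  linear_combination M i i * hx

end Symmetric

section Toggle

variable {R : Type*} [CommRing R] {M : Matrix ι ι R} {u v : ι → R}

def toggle (M : Matrix ι ι R) (u v : ι → R) : Matrix ι ι R :=
  M + vecMulVec u v + vecMulVec v u

theorem IsSymm.toggle (hM : M.IsSymm) (u v : ι → R) : (M.toggle u v).IsSymm := by
  rw [Matrix.toggle, add_assoc]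
  refine hM.add ?_
  simp only [IsSymm, transpose_add, transpose_vecMulVec, add_comm]

variable [Fintype ι]

theorem toggle_mulVec (M : Matrix ι ι R) (u v p : ι → R) :
    M.toggle u v *ᵥ p = M *ᵥ p + (v ⬝ᵥ p) • u + (u ⬝ᵥ p) • v := by
  simp only [toggle, add_mulVec, vecMulVec_mulVec, op_smul_eq_smul]

theorem toggle_mulVec_of_dotProduct_eq_zero {p : ι → R} (hu : u ⬝ᵥ p = 0) (hv : v ⬝ᵥ p = 0) :
    M.toggle u v *ᵥ p = M *ᵥ p := by
  rw [toggle_mulVec, hu, hv, zero_smul, zero_smul, add_zero, add_zero]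

variable {q₁ q₂ : ι → R}

theorem dotProduct_toggle_mulVec_left (hM : M.IsSymm) (hq₁ : M *ᵥ q₁ = u)
    (hu₁ : u ⬝ᵥ q₁ = 0) (hv₁ : v ⬝ᵥ q₁ = 0) (p : ι → R) :
    q₁ ⬝ᵥ M.toggle u v *ᵥ p = u ⬝ᵥ p := by
  rw [toggle_mulVec, dotProduct_add, dotProduct_add, hM.dotProduct_mulVec_comm, hq₁,
    dotProduct_smul, dotProduct_smul, dotProduct_comm q₁, dotProduct_comm q₁, hu₁, hv₁,
    smul_zero, smul_zero, add_zero, add_zero]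

theorem dotProduct_toggle_mulVec_right (hM : M.IsSymm) (hq₁ : M *ᵥ q₁ = u)
    (hq₂ : M *ᵥ q₂ = v) (hv₁ : v ⬝ᵥ q₁ = 0) (p : ι → R) :
    q₂ ⬝ᵥ M.toggle u v *ᵥ p = v ⬝ᵥ p + (u ⬝ᵥ p) * (q₂ ⬝ᵥ v) := by
  have hu₂ : q₂ ⬝ᵥ u = 0 := by rw [← hq₁, hM.dotProduct_mulVec_comm, hq₂, hv₁]
  rw [toggle_mulVec, dotProduct_add, dotProduct_add, hM.dotProduct_mulVec_comm, hq₂,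
    dotProduct_smul, dotProduct_smul, hu₂, smul_zero, add_zero,
    smul_eq_mul]

theorem toggle_mulVec_eq_zero_iff (hM : M.IsSymm) (hq₁ : M *ᵥ q₁ = u) (hq₂ : M *ᵥ q₂ = v)
    (hu₁ : u ⬝ᵥ q₁ = 0) (hv₁ : v ⬝ᵥ q₁ = 0) {y : ι → R} :
    M.toggle u v *ᵥ y = 0 ↔ M *ᵥ y = 0 := by
  constructor
  · intro hy
    have hu : u ⬝ᵥ y = 0 := by
      rw [← dotProduct_toggle_mulVec_left hM hq₁ hu₁ hv₁, hy, dotProduct_zero]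
    have hv : v ⬝ᵥ y = 0 := by
      simpa [hy, hu] using (dotProduct_toggle_mulVec_right hM hq₁ hq₂ hv₁ y).symm
    rwa [← toggle_mulVec_of_dotProduct_eq_zero hu hv]
  · intro hy
    have hu : u ⬝ᵥ y = 0 := by rw [← hq₁, ← hM.dotProduct_mulVec_comm, hy, dotProduct_zero]
    have hv : v ⬝ᵥ y = 0 := by rw [← hq₂, ← hM.dotProduct_mulVec_comm, hy, dotProduct_zero]
    rwa [toggle_mulVec_of_dotProduct_eq_zero hu hv]

theorem ker_toggle_mulVecLin (hM : M.IsSymm) (hq₁ : M *ᵥ q₁ = u) (hq₂ : M *ᵥ q₂ = v)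
    (hu₁ : u ⬝ᵥ q₁ = 0) (hv₁ : v ⬝ᵥ q₁ = 0) :
    LinearMap.ker (M.toggle u v).mulVecLin = LinearMap.ker M.mulVecLin := by
  ext y
  simp only [LinearMap.mem_ker, mulVecLin_apply, toggle_mulVec_eq_zero_iff hM hq₁ hq₂ hu₁ hv₁]

theorem dotProduct_eq_zero_of_toggle_mulVec_eq (hM : M.IsSymm) (hq₁ : M *ᵥ q₁ = u)
    (hu₁ : u ⬝ᵥ q₁ = 0) (hv₁ : v ⬝ᵥ q₁ = 0) {c r p : ι → R} (hr : M *ᵥ r = c)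
    (hur : u ⬝ᵥ r = 0) (hp : M.toggle u v *ᵥ p = c) : u ⬝ᵥ p = 0 := by
  rw [← dotProduct_toggle_mulVec_left hM hq₁ hu₁ hv₁, hp, ← hr, hM.dotProduct_mulVec_comm, hq₁,
    hur]

theorem toggle_mulVec_eq_iff (hM : M.IsSymm) (hq₁ : M *ᵥ q₁ = u) (hq₂ : M *ᵥ q₂ = v)
    (hu₁ : u ⬝ᵥ q₁ = 0) (hv₁ : v ⬝ᵥ q₁ = 0) {c r : ι → R} (hr : M *ᵥ r = c)
    (hur : u ⬝ᵥ r = 0) (hvr : v ⬝ᵥ r = 1) (hv : ∀ p, M *ᵥ p = c - u → v ⬝ᵥ p = 1)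
    (p : ι → R) : M.toggle u v *ᵥ p = c ↔ M *ᵥ p = c - u := by
  constructor
  · intro hp
    have hu : u ⬝ᵥ p = 0 := dotProduct_eq_zero_of_toggle_mulVec_eq hM hq₁ hu₁ hv₁ hr hur hp
    have hv : v ⬝ᵥ p = 1 := by
      have := dotProduct_toggle_mulVec_right hM hq₁ hq₂ hv₁ p
      rwa [hp, ← hr, hM.dotProduct_mulVec_comm, hq₂, hvr, hu, zero_mul, add_zero, eq_comm] at this
    rw [← hp, toggle_mulVec, hu, hv, one_smul, zero_smul, add_zero, add_sub_cancel_right]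
  · intro hp
    have hu : u ⬝ᵥ p = 0 := by
      rw [← hq₁, ← hM.dotProduct_mulVec_comm, hp, dotProduct_sub, ← hr,
        hM.dotProduct_mulVec_comm, hq₁, hur, dotProduct_comm, hu₁, sub_zero]
    rw [toggle_mulVec, hp, hu, hv p hp, one_smul, zero_smul, add_zero, sub_add_cancel]

theorem IsSymm.exists_toggle_mulVec_eq_iff {K : Type*} [Field K] {M : Matrix ι ι K}
    {u v q₁ q₂ : ι → K} (hM : M.IsSymm) (hq₁ : M *ᵥ q₁ = u) (hq₂ : M *ᵥ q₂ = v)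
    (hu₁ : u ⬝ᵥ q₁ = 0) (hv₁ : v ⬝ᵥ q₁ = 0) (c : ι → K) :
    (∃ p, M.toggle u v *ᵥ p = c) ↔ ∃ p, M *ᵥ p = c := by
  simp only [(hM.toggle u v).exists_mulVec_eq_iff, hM.exists_mulVec_eq_iff,
    toggle_mulVec_eq_zero_iff hM hq₁ hq₂ hu₁ hv₁]

end Toggle

end Matrix

namespace SimpleGraph

variable {V : Type*} [Fintype V] (G : SimpleGraph V)

theorem isSymm_nbhdMatrix : (nbhdMatrix G).IsSymm := by
  refine IsSymm.ext fun i j => ?_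
  simp only [nbhdMatrix, of_apply, eq_comm, G.adj_comm]

theorem diag_nbhdMatrix : diag (nbhdMatrix G) = 1 := by
  ext i
  simp [nbhdMatrix]

theorem dotProduct_nbhdMatrix_mulVec_self (y : V → ZMod 2) :
    y ⬝ᵥ nbhdMatrix G *ᵥ y = 1 ⬝ᵥ y := by
  rw [(isSymm_nbhdMatrix G).dotProduct_mulVec_self_s13, diag_nbhdMatrix]

-- Sutner's theorem.
theorem exists_nbhdMatrix_mulVec_eq_one : ∃ r, nbhdMatrix G *ᵥ r = 1 := by
  refine (isSymm_nbhdMatrix G).exists_mulVec_eq_iff 1 |>.2 fun y hy => ?_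
  rw [← dotProduct_nbhdMatrix_mulVec_self, hy, dotProduct_zero]

theorem nbhdMatrix_mulVec_dotProduct_self {r : V → ZMod 2} (hr : nbhdMatrix G *ᵥ r = 1)
    (q : V → ZMod 2) : nbhdMatrix G *ᵥ q ⬝ᵥ q = nbhdMatrix G *ᵥ q ⬝ᵥ r := by
  rw [dotProduct_comm, dotProduct_nbhdMatrix_mulVec_self, ← hr,
    ← (isSymm_nbhdMatrix G).dotProduct_mulVec_comm, dotProduct_comm]

end SimpleGraph

theorem stmt13_general {V : Type*} [Fintype V] (G : SimpleGraph V) (A₁ A₂ : Set V)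
    (h1 : NO (nbhdMatrix G) A₁) (h2 : AO (nbhdMatrix G) A₂)
    (h3 : cAO (nbhdMatrix G) (chi A₁ + 1) A₂) :
    (∀ p : V → ZMod 2, (starMatrix G A₁ A₂).mulVec p = 1 ↔
      (nbhdMatrix G).mulVec p = chi A₁ + 1) ∧
    NO (starMatrix G A₁ A₂) A₁ ∧ AO (starMatrix G A₁ A₂) A₂ ∧
    nullityM (starMatrix G A₁ A₂) = nullityM (nbhdMatrix G) := by
  obtain ⟨⟨q₁, hq₁⟩, hA₁⟩ := h1
  obtain ⟨⟨q₂, hq₂⟩, hA₂⟩ := h2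
  obtain ⟨r, hr⟩ := G.exists_nbhdMatrix_mulVec_eq_one
  have hN := G.isSymm_nbhdMatrix
  have hu₁ : chi A₁ ⬝ᵥ q₁ = 0 := by
    rw [← hq₁, G.nbhdMatrix_mulVec_dotProduct_self hr, hq₁]
    exact hA₁ r hr
  have hv₁ : chi A₂ ⬝ᵥ q₁ = 0 := by
    have := h3.2 (q₁ + r) (by rw [mulVec_add, hq₁, hr])
    rwa [dotProduct_add, hA₂ r hr, add_eq_right] at this
  have hc : (1 : V → ZMod 2) - chi A₁ = chi A₁ + 1 := by
    ext i
    rw [Pi.sub_apply, Pi.add_apply, CharTwo.sub_eq_add, add_comm]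
  have hsol (p : V → ZMod 2) : starMatrix G A₁ A₂ *ᵥ p = 1 ↔ nbhdMatrix G *ᵥ p = chi A₁ + 1 := by
    rw [← hc]
    exact toggle_mulVec_eq_iff hN hq₁ hq₂ hu₁ hv₁ hr (hA₁ r hr) (hA₂ r hr)
      (fun p hp => h3.2 p (hp.trans hc)) p
  have hsolv := hN.exists_toggle_mulVec_eq_iff hq₁ hq₂ hu₁ hv₁
  refine ⟨hsol, ⟨(hsolv _).2 ⟨q₁, hq₁⟩, fun p hp => ?_⟩,
    ⟨(hsolv _).2 ⟨q₂, hq₂⟩, fun p hp => h3.2 p ((hsol p).1 hp)⟩, ?_⟩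
  · exact dotProduct_eq_zero_of_toggle_mulVec_eq hN hq₁ hu₁ hv₁ hr (hA₁ r hr) hp
  · rw [nullityM, nullityM, starMatrix, ← toggle, ker_toggle_mulVecLin hN hq₁ hq₂ hu₁ hv₁]

/-- Proposition (NO, AO, `x̄_{A₁}`-AO): the odd dominating patterns of `G*` are exactly
the solving patterns of `x̄_{A₁}` in `G`; in `G*`, `A₁` is NO and `A₂` is AO, and
`ν(G*) = ν(G)`. -/
theorem stmt13 {V : Type*} [Fintype V] (G : SimpleGraph V) (A₁ A₂ : Set V)
    (hd : Disjoint A₁ A₂)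
    (h1 : NO (nbhdMatrix G) A₁) (h2 : AO (nbhdMatrix G) A₂)
    (h3 : cAO (nbhdMatrix G) (chi A₁ + 1) A₂) :
    (∀ p : V → ZMod 2, (starMatrix G A₁ A₂).mulVec p = 1 ↔
      (nbhdMatrix G).mulVec p = chi A₁ + 1) ∧
    NO (starMatrix G A₁ A₂) A₁ ∧ AO (starMatrix G A₁ A₂) A₂ ∧
    nullityM (starMatrix G A₁ A₂) = nullityM (nbhdMatrix G) :=
  stmt13_general G A₁ A₂ h1 h2 h3
end
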